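/- Let n ≥ 2 be even, t > 0, C > 0 and β := (t/(2n))^{1/4}. Suppose the environment Ξ′ satisfies Z_n^{Ξ′}(β) ≥ √(2/(nπ)) · 𝔼Z_n(β) and Overlap_{Ξ′}(β) ≤ C√n. Then for every environment Ξ, (πt/2)^{−1/4} · ( log √(nπ/2) + log( Z_n^{Ξ}(β) / 𝔼Z_n(β) ) ) ≥ −C^{1/2} π^{−1/4} d_n(Ξ, Ξ′). -/

import Mathlib

noncomputable section

open Finset

/-- Position after `i` steps of the nearest-neighbour walk on `ℤ` started at `0`,
with step signs `ε` (a `+1` step when `ε j = true`, a `−1` step otherwise). -/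
def walk (n : ℕ) (ε : Fin n → Bool) (i : ℕ) : ℤ :=
  ∑ j : Fin n, if (j : ℕ) < i then (if ε j then 1 else -1) else 0

/-- Energy `Σ_{i=1}^n Ξ(i, S_i)` of the path with step signs `ε` in the
environment `Ξ`. -/
def pathEnergy (n : ℕ) (Ξ : ℕ × ℤ → ℝ) (ε : Fin n → Bool) : ℝ :=
  ∑ i ∈ Finset.Icc 1 n, Ξ (i, walk n ε i)

/-- Point-to-point polymer partition function
`Z_n^Ξ(β) = E_S[exp(β Σ_{i=1}^n Ξ(i,S_i)) 1_{S_n = 0}]`, where `E_S` is the uniform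
average over the `2^n` nearest-neighbour paths from `0`. -/
def Zn (n : ℕ) (β : ℝ) (Ξ : ℕ × ℤ → ℝ) : ℝ :=
  ((2 : ℝ) ^ n)⁻¹ * ∑ ε : Fin n → Bool,
    if walk n ε n = 0 then Real.exp (β * pathEnergy n Ξ ε) else 0

/-- Distance `d_n(Ξ,Ξ')` between two environments:
`d_n(Ξ,Ξ')² = Σ_{i=1}^n Σ_{|x| ≤ i} (Ξ(i,x) − Ξ'(i,x))²`. -/
def dEnv (n : ℕ) (Ξ Ξ' : ℕ × ℤ → ℝ) : ℝ :=
  Real.sqrt (∑ i ∈ Finset.Icc 1 n, ∑ x ∈ Finset.Icc (-(i : ℤ)) (i : ℤ),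
    (Ξ (i, x) - Ξ' (i, x)) ^ 2)

/-- `L_n = Σ_{i=1}^n 1_{S_i¹ = S_i²}`, the number of coincidences of the two paths. -/
def overlapCount (n : ℕ) (ε₁ ε₂ : Fin n → Bool) : ℕ :=
  ((Finset.Icc 1 n).filter fun i => walk n ε₁ i = walk n ε₂ i).card

/-- `E_{S¹,S²}[L_n · exp(β Σ_{i=1}^n (Ξ(i,S_i¹) + Ξ(i,S_i²))) · 1_{S_n¹ = S_n² = 0}]`,
the joint expectation over two independent `n`-step simple random walks. -/
def replicaAvg (n : ℕ) (β : ℝ) (Ξ : ℕ × ℤ → ℝ) : ℝ :=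
  ((2 : ℝ) ^ n * (2 : ℝ) ^ n)⁻¹ * ∑ ε₁ : Fin n → Bool, ∑ ε₂ : Fin n → Bool,
    if walk n ε₁ n = 0 ∧ walk n ε₂ n = 0 then
      (overlapCount n ε₁ ε₂ : ℝ) * Real.exp (β * (pathEnergy n Ξ ε₁ + pathEnergy n Ξ ε₂))
    else 0

/-- The replica overlap `Overlap_Ξ(β)`. -/
def Overlap (n : ℕ) (β : ℝ) (Ξ : ℕ × ℤ → ℝ) : ℝ :=
  replicaAvg n β Ξ / (Zn n β Ξ) ^ 2

open MeasureTheory ProbabilityTheory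

/-- A family `Ξr : Ω → (ℕ × ℤ → ℝ)` is an i.i.d. standard Gaussian random environment
if its coordinates are measurable, independent, and each has the standard Gaussian law. -/
def IsIIDGaussianEnv {Ω : Type*} [MeasurableSpace Ω] (P : Measure Ω)
    (Ξr : Ω → ℕ × ℤ → ℝ) : Prop :=
  (∀ p : ℕ × ℤ, Measurable fun ω => Ξr ω p) ∧
  iIndepFun (fun p ω => Ξr ω p) P ∧
  ∀ p : ℕ × ℤ, Measure.map (fun ω => Ξr ω p) P = gaussianReal 0 1

/-!
Under the polymer measure of `Ξ'`, `Z_n^Ξ / Z_n^{Ξ'}` is the mean of `exp(β(H_Ξ − H_{Ξ'}))`, so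
Jensen's inequality gives `log Z_n^Ξ ≥ log Z_n^{Ξ'} + β ⟨ρ, Ξ − Ξ'⟩`, where `ρ(i, x)` is the
polymer probability of visiting `x` at time `i`. Cauchy–Schwarz bounds `|⟨ρ, Ξ − Ξ'⟩|` by
`‖ρ‖₂ d_n(Ξ, Ξ')`, and `‖ρ‖₂²` is exactly the replica overlap of `Ξ'`. The two hypotheses on `Ξ'`
and the choice of `β` turn this Lipschitz bound into the stated one. When `𝔼Z_n(β) = 0` the
logarithm `log (Z / 0) = log 0` is `0` and the bound is trivial.
-/

theorem Real.log_sum_add_sum_mul_div_le_log_sum_mul_exp {ι : Type*} (s : Finset ι)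
    {w : ι → ℝ} (hw : ∀ i ∈ s, 0 ≤ w i) (hW : 0 < ∑ i ∈ s, w i) (f : ι → ℝ) :
    Real.log (∑ i ∈ s, w i) + (∑ i ∈ s, w i * f i) / ∑ i ∈ s, w i
      ≤ Real.log (∑ i ∈ s, w i * Real.exp (f i)) := by
  set W := ∑ i ∈ s, w i
  have hjensen : Real.exp (∑ i ∈ s, w i / W * f i) ≤ ∑ i ∈ s, w i / W * Real.exp (f i) := by
    simpa only [smul_eq_mul] using convexOn_exp.map_sum_le
      (fun i hi => div_nonneg (hw i hi) hW.le)
      (by rw [← Finset.sum_div, div_self hW.ne']) (fun i _ => Set.mem_univ (f i))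
  simp only [div_mul_eq_mul_div, ← Finset.sum_div] at hjensen
  have hpos : 0 < ∑ i ∈ s, w i * Real.exp (f i) :=
    (div_pos_iff_of_pos_right hW).mp ((Real.exp_pos _).trans_le hjensen)
  rw [← Real.le_log_iff_exp_le (div_pos hpos hW), Real.log_div hpos.ne' hW.ne'] at hjensen
  linarith

theorem Finset.sum_sum_mul_mul_sum_mul_eq_sum_sq {ι κ R : Type*} [CommSemiring R]
    (s : Finset ι) (t : Finset κ) (w : ι → R) (g : ι → κ → R) :
    ∑ a ∈ s, ∑ b ∈ s, w a * w b * ∑ q ∈ t, g a q * g b q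
      = ∑ q ∈ t, (∑ a ∈ s, w a * g a q) ^ 2 := by
  simp only [sq, Finset.sum_mul_sum]
  simp only [Finset.mul_sum]
  rw [Finset.sum_comm (s := t)]
  refine Finset.sum_congr rfl fun a _ => ?_
  rw [Finset.sum_comm (s := t)]
  exact Finset.sum_congr rfl fun b _ => Finset.sum_congr rfl fun q _ => by ring

theorem walk_mem_Icc (n : ℕ) (ε : Fin n → Bool) (i : ℕ) :
    walk n ε i ∈ Finset.Icc (-(i : ℤ)) i := by
  have hsteps : (Finset.univ.filter fun j : Fin n => (j : ℕ) < i).card ≤ i := by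
    simpa using Finset.card_le_card_of_injOn (t := Finset.range i) (fun j : Fin n => (j : ℕ))
      (fun j hj => by simpa using hj) (fun a _ b _ h => Fin.val_injective h)
  have habs : |walk n ε i| ≤ i := by
    refine (Finset.abs_sum_le_sum_abs _ _).trans ?_
    calc ∑ j : Fin n, |if (j : ℕ) < i then (if ε j then (1 : ℤ) else -1) else 0|
        = ∑ j : Fin n, if (j : ℕ) < i then (1 : ℤ) else 0 :=
          Finset.sum_congr rfl fun j _ => by split_ifs <;> simp
      _ ≤ i := by rw [Finset.sum_boole]; exact_mod_cast hsteps
  exact Finset.mem_Icc.mpr (abs_le.mp habs)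

theorem exists_walk_eq_zero {n : ℕ} (hn : Even n) : ∃ ε : Fin n → Bool, walk n ε n = 0 := by
  obtain ⟨k, rfl⟩ := hn
  refine ⟨fun j => decide ((j : ℕ) % 2 = 0), ?_⟩
  have halternating : ∀ m, ∑ j ∈ Finset.range (m + m), (if j % 2 = 0 then (1 : ℤ) else -1) = 0 := by
    intro m
    induction m with
    | zero => simp
    | succ m ih =>
      rw [show m + 1 + (m + 1) = m + m + 1 + 1 by omega, Finset.sum_range_succ,
        Finset.sum_range_succ, ih, if_pos (by omega), if_neg (by omega)]
      ring
  rw [walk, ← halternating k, Finset.sum_range (fun j => if j % 2 = 0 then (1 : ℤ) else -1)]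
  exact Finset.sum_congr rfl fun j _ => by simp [j.isLt]

def spaceTimeBox (n : ℕ) : Finset (ℕ × ℤ) :=
  (Finset.Icc 1 n ×ˢ Finset.Icc (-(n : ℤ)) n).filter fun q => q.2 ∈ Finset.Icc (-(q.1 : ℤ)) q.1

theorem sum_spaceTimeBox {M : Type*} [AddCommMonoid M] (n : ℕ) (f : ℕ × ℤ → M) :
    ∑ q ∈ spaceTimeBox n, f q = ∑ i ∈ Finset.Icc 1 n, ∑ x ∈ Finset.Icc (-(i : ℤ)) i, f (i, x) :=
  Finset.sum_finset_product _ _ _ fun q => by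
    simp only [spaceTimeBox, Finset.mem_filter, Finset.mem_product, Finset.mem_Icc]
    omega

def occupation (n : ℕ) (ε : Fin n → Bool) (q : ℕ × ℤ) : ℝ :=
  if walk n ε q.1 = q.2 then 1 else 0

theorem pathEnergy_eq_sum_occupation (n : ℕ) (Ξ : ℕ × ℤ → ℝ) (ε : Fin n → Bool) :
    pathEnergy n Ξ ε = ∑ q ∈ spaceTimeBox n, occupation n ε q * Ξ q := by
  rw [sum_spaceTimeBox, pathEnergy]
  refine Finset.sum_congr rfl fun i _ => ?_
  simp only [occupation, ite_mul, one_mul, zero_mul]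
  rw [Finset.sum_ite_eq, if_pos (walk_mem_Icc n ε i)]

theorem overlapCount_eq_sum_occupation (n : ℕ) (ε₁ ε₂ : Fin n → Bool) :
    (overlapCount n ε₁ ε₂ : ℝ)
      = ∑ q ∈ spaceTimeBox n, occupation n ε₁ q * occupation n ε₂ q := by
  rw [sum_spaceTimeBox, overlapCount, Finset.natCast_card_filter]
  refine Finset.sum_congr rfl fun i _ => ?_
  simp only [occupation, ite_mul, one_mul, zero_mul]
  rw [Finset.sum_ite_eq, if_pos (walk_mem_Icc n ε₁ i)]
  simp only [eq_comm]

theorem dEnv_eq_sqrt_sum (n : ℕ) (Ξ Ξ' : ℕ × ℤ → ℝ) :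
    dEnv n Ξ Ξ' = √(∑ q ∈ spaceTimeBox n, (Ξ q - Ξ' q) ^ 2) := by
  rw [dEnv, sum_spaceTimeBox]

def pathWeight (n : ℕ) (β : ℝ) (Ξ : ℕ × ℤ → ℝ) (ε : Fin n → Bool) : ℝ :=
  ((2 : ℝ) ^ n)⁻¹ * if walk n ε n = 0 then Real.exp (β * pathEnergy n Ξ ε) else 0

section PathWeight

variable {n : ℕ} {β : ℝ} {Ξ : ℕ × ℤ → ℝ}

theorem Zn_eq_sum_pathWeight : Zn n β Ξ = ∑ ε, pathWeight n β Ξ ε := Finset.mul_sum _ _ _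

theorem pathWeight_nonneg (ε : Fin n → Bool) : 0 ≤ pathWeight n β Ξ ε := by
  unfold pathWeight
  split_ifs <;> positivity

theorem Zn_pos (hn : Even n) : 0 < Zn n β Ξ := by
  obtain ⟨ε₀, hε₀⟩ := exists_walk_eq_zero hn
  rw [Zn_eq_sum_pathWeight]
  refine Finset.sum_pos' (fun ε _ => pathWeight_nonneg ε) ⟨ε₀, Finset.mem_univ _, ?_⟩
  rw [pathWeight, if_pos hε₀]
  positivity

theorem pathWeight_eq_mul_exp {Ξ' : ℕ × ℤ → ℝ} (ε : Fin n → Bool) :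
    pathWeight n β Ξ ε
      = pathWeight n β Ξ' ε * Real.exp (β * (pathEnergy n Ξ ε - pathEnergy n Ξ' ε)) := by
  unfold pathWeight
  split_ifs
  · rw [mul_assoc, ← Real.exp_add]
    ring_nf
  · simp

theorem replicaAvg_eq_sum_sq :
    replicaAvg n β Ξ
      = ∑ q ∈ spaceTimeBox n, (∑ ε, pathWeight n β Ξ ε * occupation n ε q) ^ 2 := by
  rw [← Finset.sum_sum_mul_mul_sum_mul_eq_sum_sq, replicaAvg, Finset.mul_sum]
  refine Finset.sum_congr rfl fun ε₁ _ => ?_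
  rw [Finset.mul_sum]
  refine Finset.sum_congr rfl fun ε₂ _ => ?_
  rw [← overlapCount_eq_sum_occupation, pathWeight, pathWeight, ite_and]
  split_ifs
  · rw [mul_add, Real.exp_add]
    ring
  all_goals simp

end PathWeight

def polymerMarginal (n : ℕ) (β : ℝ) (Ξ : ℕ × ℤ → ℝ) (q : ℕ × ℤ) : ℝ :=
  (∑ ε, pathWeight n β Ξ ε * occupation n ε q) / Zn n β Ξ

theorem Overlap_eq_sum_sq_polymerMarginal (n : ℕ) (β : ℝ) (Ξ : ℕ × ℤ → ℝ) :
    Overlap n β Ξ = ∑ q ∈ spaceTimeBox n, polymerMarginal n β Ξ q ^ 2 := by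
  rw [Overlap, replicaAvg_eq_sum_sq, Finset.sum_div]
  simp only [polymerMarginal, div_pow]

theorem log_Zn_add_mul_sum_polymerMarginal_le {n : ℕ} (hn : Even n) (β : ℝ) (Ξ Ξ' : ℕ × ℤ → ℝ) :
    Real.log (Zn n β Ξ') + β * ∑ q ∈ spaceTimeBox n, polymerMarginal n β Ξ' q * (Ξ q - Ξ' q)
      ≤ Real.log (Zn n β Ξ) := by
  have hZ' : 0 < ∑ ε, pathWeight n β Ξ' ε := Zn_eq_sum_pathWeight (Ξ := Ξ') ▸ Zn_pos hn
  have hjensen := Real.log_sum_add_sum_mul_div_le_log_sum_mul_exp Finset.univ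
    (fun ε _ => pathWeight_nonneg ε) hZ'
    (fun ε => β * (pathEnergy n Ξ ε - pathEnergy n Ξ' ε))
  have hmean : (∑ ε, pathWeight n β Ξ' ε * (β * (pathEnergy n Ξ ε - pathEnergy n Ξ' ε)))
      / ∑ ε, pathWeight n β Ξ' ε
      = β * ∑ q ∈ spaceTimeBox n, polymerMarginal n β Ξ' q * (Ξ q - Ξ' q) := by
    simp only [pathEnergy_eq_sum_occupation, ← Finset.sum_sub_distrib, ← mul_sub,
      polymerMarginal, ← Zn_eq_sum_pathWeight, Finset.mul_sum, Finset.sum_div, Finset.sum_mul]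
    rw [Finset.sum_comm]
    exact Finset.sum_congr rfl fun q _ => Finset.sum_congr rfl fun ε _ => by ring
  rwa [hmean, ← Zn_eq_sum_pathWeight, ← Finset.sum_congr rfl fun ε _ => pathWeight_eq_mul_exp ε,
    ← Zn_eq_sum_pathWeight] at hjensen

theorem log_Zn_sub_le {n : ℕ} {β : ℝ} (hn : Even n) (hβ : 0 ≤ β) (Ξ Ξ' : ℕ × ℤ → ℝ) :
    Real.log (Zn n β Ξ') - β * (√(Overlap n β Ξ') * dEnv n Ξ Ξ') ≤ Real.log (Zn n β Ξ) := by
  have hcs := Real.sum_mul_le_sqrt_mul_sqrt (spaceTimeBox n) (polymerMarginal n β Ξ')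
    fun q => -(Ξ q - Ξ' q)
  simp only [mul_neg, Finset.sum_neg_distrib, neg_sq, ← Overlap_eq_sum_sq_polymerMarginal,
    ← dEnv_eq_sqrt_sum] at hcs
  have := mul_le_mul_of_nonneg_left (neg_le.mp hcs) hβ
  linarith [log_Zn_add_mul_sum_polymerMarginal_le hn β Ξ Ξ']

theorem Real.rpow_neg_quarter_mul_rpow_quarter_mul_sqrt_mul_sqrt {a t C x : ℝ} (ha : 0 < a)
    (ht : 0 < t) (hC : 0 ≤ C) (hx : 0 < x) :
    (a * t / 2) ^ (-(1 : ℝ) / 4) * ((t / (2 * x)) ^ ((1 : ℝ) / 4) * √(C * √x))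
      = C ^ ((1 : ℝ) / 2) * a ^ (-(1 : ℝ) / 4) := by
  have hsqrt : √(C * √x) = C ^ ((1 : ℝ) / 2) * x ^ ((1 : ℝ) / 4) := by
    rw [Real.sqrt_eq_rpow, Real.sqrt_eq_rpow, Real.mul_rpow hC (by positivity),
      ← Real.rpow_mul hx.le]
    norm_num
  have hquarter : (t / (2 * x)) ^ ((1 : ℝ) / 4) * x ^ ((1 : ℝ) / 4) = (t / 2) ^ ((1 : ℝ) / 4) := by
    rw [← Real.mul_rpow (by positivity) hx.le]
    congr 1
    field_simp
  have hcancel : (t / 2) ^ (-(1 : ℝ) / 4) * (t / 2) ^ ((1 : ℝ) / 4) = 1 := by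
    rw [← Real.rpow_add (by positivity)]
    norm_num
  rw [hsqrt, mul_div_assoc, Real.mul_rpow ha.le (by positivity)]
  calc a ^ (-(1 : ℝ) / 4) * (t / 2) ^ (-(1 : ℝ) / 4)
        * ((t / (2 * x)) ^ ((1 : ℝ) / 4) * (C ^ ((1 : ℝ) / 2) * x ^ ((1 : ℝ) / 4)))
      = C ^ ((1 : ℝ) / 2) * a ^ (-(1 : ℝ) / 4) * ((t / 2) ^ (-(1 : ℝ) / 4)
        * ((t / (2 * x)) ^ ((1 : ℝ) / 4) * x ^ ((1 : ℝ) / 4))) := by ring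
    _ = C ^ ((1 : ℝ) / 2) * a ^ (-(1 : ℝ) / 4) := by rw [hquarter, hcancel, mul_one]

theorem polymer_lower_bound_of_good_env_general {Ω : Type*} [MeasurableSpace Ω] (P : Measure Ω)
    (Ξr : Ω → ℕ × ℤ → ℝ)
    (n : ℕ) (hn : 2 ≤ n) (hne : Even n) (t C : ℝ) (ht : 0 < t) (hC : 0 < C)
    (β : ℝ) (hβ : β = (t / (2 * n)) ^ ((1 : ℝ) / 4))
    (EZ : ℝ) (hEZ : EZ = ∫ ω, Zn n β (Ξr ω) ∂P)
    (Ξ' : ℕ × ℤ → ℝ)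
    (hZ' : Real.sqrt (2 / (n * Real.pi)) * EZ ≤ Zn n β Ξ')
    (hov : Overlap n β Ξ' ≤ C * Real.sqrt n)
    (Ξ : ℕ × ℤ → ℝ) :
    -(C ^ ((1 : ℝ) / 2) * Real.pi ^ (-(1 : ℝ) / 4) * dEnv n Ξ Ξ')
      ≤ (Real.pi * t / 2) ^ (-(1 : ℝ) / 4) *
          (Real.log (Real.sqrt (n * Real.pi / 2)) + Real.log (Zn n β Ξ / EZ)) := by
  have hn2 : (2 : ℝ) ≤ n := by exact_mod_cast hn
  have hd : 0 ≤ dEnv n Ξ Ξ' := Real.sqrt_nonneg _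
  have hlog_sqrt : 0 ≤ Real.log √(n * Real.pi / 2) :=
    Real.log_nonneg (Real.one_le_sqrt.mpr (by nlinarith [Real.pi_gt_three]))
  rcases (hEZ ▸ integral_nonneg fun ω => (Zn_pos hne).le : 0 ≤ EZ).eq_or_lt with rfl | hEZ_pos
  · rw [div_zero, Real.log_zero, add_zero]
    exact (neg_nonpos.mpr (by positivity)).trans (mul_nonneg (by positivity) hlog_sqrt)
  have hn0 : (0 : ℝ) < n := by linarith
  have hβ0 : 0 ≤ β := hβ ▸ by positivity
  have hZ'_log : Real.log EZ ≤ Real.log √(n * Real.pi / 2) + Real.log (Zn n β Ξ') := by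
    rw [← inv_div, Real.sqrt_inv, inv_mul_le_iff₀ (by positivity)] at hZ'
    rw [← Real.log_mul (by positivity) (Zn_pos hne).ne']
    exact Real.log_le_log hEZ_pos hZ'
  have hlip : β * (√(Overlap n β Ξ') * dEnv n Ξ Ξ') ≤ β * (√(C * √n) * dEnv n Ξ Ξ') := by
    gcongr
  have hlog := log_Zn_sub_le hne hβ0 Ξ Ξ'
  rw [Real.log_div (Zn_pos hne).ne' hEZ_pos.ne',
    ← Real.rpow_neg_quarter_mul_rpow_quarter_mul_sqrt_mul_sqrt Real.pi_pos ht hC.le hn0, ← hβ]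
  calc _ = (Real.pi * t / 2) ^ (-(1 : ℝ) / 4) * -(β * (√(C * √n) * dEnv n Ξ Ξ')) := by ring
    _ ≤ _ := mul_le_mul_of_nonneg_left (by linarith) (by positivity)

/-- Let `n ≥ 2` be even, `t > 0`, `C > 0` and `β = (t/(2n))^{1/4}`. If the environment
`Ξ'` satisfies `Z_n^{Ξ'}(β) ≥ √(2/(nπ)) 𝔼Z_n(β)` and `Overlap_{Ξ'}(β) ≤ C√n`, then for
every environment `Ξ`,
`(πt/2)^{−1/4} (log √(nπ/2) + log(Z_n^Ξ(β)/𝔼Z_n(β))) ≥ −C^{1/2} π^{−1/4} d_n(Ξ,Ξ')`. -/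
theorem polymer_lower_bound_of_good_env {Ω : Type*} [MeasurableSpace Ω] (P : Measure Ω)
    [IsProbabilityMeasure P] (Ξr : Ω → ℕ × ℤ → ℝ) (hiid : IsIIDGaussianEnv P Ξr)
    (n : ℕ) (hn : 2 ≤ n) (hne : Even n) (t C : ℝ) (ht : 0 < t) (hC : 0 < C)
    (β : ℝ) (hβ : β = (t / (2 * n)) ^ ((1 : ℝ) / 4))
    (EZ : ℝ) (hEZ : EZ = ∫ ω, Zn n β (Ξr ω) ∂P)
    (Ξ' : ℕ × ℤ → ℝ)
    (hZ' : Real.sqrt (2 / (n * Real.pi)) * EZ ≤ Zn n β Ξ')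
    (hov : Overlap n β Ξ' ≤ C * Real.sqrt n)
    (Ξ : ℕ × ℤ → ℝ) :
    -(C ^ ((1 : ℝ) / 2) * Real.pi ^ (-(1 : ℝ) / 4) * dEnv n Ξ Ξ')
      ≤ (Real.pi * t / 2) ^ (-(1 : ℝ) / 4) *
          (Real.log (Real.sqrt (n * Real.pi / 2)) + Real.log (Zn n β Ξ / EZ)) :=
  polymer_lower_bound_of_good_env_general P Ξr n hn hne t C ht hC β hβ EZ hEZ Ξ' hZ' hov Ξ
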